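/- arXiv:1506.04882 — 3 statements merged into one kernel-verified Lean document; each statement's English description precedes it below -/
import Mathlib

section
/- Two-dimensional Sperner's lemma on the triangulated right-triangle grid: for any 3-coloring c of the grid points {(x,y) ∈ ℕ² : x + y < N} satisfying the boundary conditions that no point with x = 0 gets color 0, no point with y = 0 gets color 1, and no point with x + y = N − 1 gets color 2, there exists a trichromatic triangle, i.e., an elementary triangle of the triangulation whose three vertices receive three distinct colors. -/
/-- Door indicator: 1 if the edge colors are {0,1}, else 0. -/
def g2 : Fin 3 → Fin 3 → ZMod 2 := fun a b =>
  if (a = 0 ∧ b = 1) ∨ (a = 1 ∧ b = 0) then 1 else 0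

/-- Indicator of color 1. -/
def t2 : Fin 3 → ZMod 2 := fun a => if a = 1 then 1 else 0

lemma g2_tri1 : ∀ a b d : Fin 3, (a = b ∨ a = d ∨ b = d) →
    g2 a b = g2 a d + g2 b d := by decide

lemma g2_tri2 : ∀ a b d : Fin 3, (a = b ∨ a = d ∨ b = d) →
    g2 b d = g2 a b + g2 a d := by decide

lemma g2_no0 : ∀ a b : Fin 3, a ≠ 0 → b ≠ 0 → g2 a b = 0 := by decide

lemma g2_no1 : ∀ a b : Fin 3, a ≠ 1 → b ≠ 1 → g2 a b = 0 := by decide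

lemma g2_no2 : ∀ a b : Fin 3, a ≠ 2 → b ≠ 2 → g2 a b = t2 a + t2 b := by decide

lemma t2_no1 : ∀ a : Fin 3, a ≠ 1 → t2 a = 0 := by decide

lemma t2_one : ∀ a : Fin 3, a ≠ 0 → a ≠ 2 → t2 a = 1 := by decide

lemma two_self : ∀ u : ZMod 2, u + u = 0 := by decide

/-- Two-dimensional Sperner's lemma on the triangulated right-triangle grid
`{(x,y) : x + y < N}`: any 3-coloring with no color 0 on the left edge, no
color 1 on the bottom edge, and no color 2 on the diagonal admits a
trichromatic elementary triangle. -/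
theorem sperner_two_dim (N : ℕ) (hN : 2 ≤ N) (c : ℕ × ℕ → Fin 3)
    (hleft : ∀ y, y < N → c (0, y) ≠ 0)
    (hbottom : ∀ x, x < N → c (x, 0) ≠ 1)
    (hdiag : ∀ x y, x + y = N - 1 → c (x, y) ≠ 2) :
    ∃ x y : ℕ,
      (x + y + 1 < N ∧
        c (x, y) ≠ c (x + 1, y) ∧ c (x, y) ≠ c (x, y + 1) ∧
        c (x + 1, y) ≠ c (x, y + 1)) ∨
      (x + y + 2 < N ∧
        c (x + 1, y) ≠ c (x, y + 1) ∧ c (x + 1, y) ≠ c (x + 1, y + 1) ∧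
        c (x, y + 1) ≠ c (x + 1, y + 1)) := by
  by_contra hcon
  push_neg at hcon
  obtain ⟨K, rfl⟩ : ∃ K, N = K + 1 := ⟨N - 1, by omega⟩
  set S : ℕ → ZMod 2 :=
    fun y => ∑ x ∈ Finset.range (K - y), g2 (c (x, y)) (c (x + 1, y)) with hS
  -- up triangles
  have hup : ∀ x y : ℕ, x + y < K →
      g2 (c (x, y)) (c (x + 1, y)) =
        g2 (c (x, y)) (c (x, y + 1)) + g2 (c (x + 1, y)) (c (x, y + 1)) := by
    intro x y h
    apply g2_tri1
    have h1 := (hcon x y).1 (by omega)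
    by_cases e1 : c (x, y) = c (x + 1, y)
    · exact Or.inl e1
    by_cases e2 : c (x, y) = c (x, y + 1)
    · exact Or.inr (Or.inl e2)
    exact Or.inr (Or.inr (h1 e1 e2))
  -- down triangles
  have hdown : ∀ x y : ℕ, x + y + 1 < K →
      g2 (c (x, y + 1)) (c (x + 1, y + 1)) =
        g2 (c (x + 1, y)) (c (x, y + 1)) + g2 (c (x + 1, y)) (c (x + 1, y + 1)) := by
    intro x y h
    apply g2_tri2
    have h1 := (hcon x y).2 (by omega)
    by_cases e1 : c (x + 1, y) = c (x, y + 1)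
    · exact Or.inl e1
    by_cases e2 : c (x + 1, y) = c (x + 1, y + 1)
    · exact Or.inr (Or.inl e2)
    exact Or.inr (Or.inr (h1 e1 e2))
  -- the recurrence between consecutive rows
  have hrec : ∀ y, y < K →
      S (y + 1) = S y + g2 (c (K - y, y)) (c (K - y - 1, y + 1)) := by
    intro y hy
    obtain ⟨M, hM⟩ : ∃ M, K - y = M + 1 := ⟨K - y - 1, by omega⟩
    have hM2 : K - (y + 1) = M := by omega
    have e1 : S y =
        (∑ x ∈ Finset.range M, g2 (c (x + 1, y)) (c (x + 1, y + 1)))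
          + g2 (c (0, y)) (c (0, y + 1))
        + ((∑ x ∈ Finset.range M, g2 (c (x + 1, y)) (c (x, y + 1)))
          + g2 (c (M + 1, y)) (c (M, y + 1))) := by
      have h1 : S y = ∑ x ∈ Finset.range (M + 1),
          (g2 (c (x, y)) (c (x, y + 1)) + g2 (c (x + 1, y)) (c (x, y + 1))) := by
        simp only [hS, hM]
        exact Finset.sum_congr rfl (fun x hx => hup x y (by
          have := Finset.mem_range.mp hx; omega))
      rw [h1, Finset.sum_add_distrib, Finset.sum_range_succ', Finset.sum_range_succ]
    have e2 : S (y + 1) =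
        (∑ x ∈ Finset.range M, g2 (c (x + 1, y)) (c (x, y + 1)))
          + ∑ x ∈ Finset.range M, g2 (c (x + 1, y)) (c (x + 1, y + 1)) := by
      have h1 : S (y + 1) = ∑ x ∈ Finset.range M,
          (g2 (c (x + 1, y)) (c (x, y + 1)) + g2 (c (x + 1, y)) (c (x + 1, y + 1))) := by
        simp only [hS, hM2]
        exact Finset.sum_congr rfl (fun x hx => hdown x y (by
          have := Finset.mem_range.mp hx; omega))
      rw [h1, Finset.sum_add_distrib]
    have hfin : ∀ A B L0 RM : ZMod 2, (A + L0 + (B + RM)) + (B + A) = L0 + RM := by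
      decide
    have key : S y + S (y + 1) =
        g2 (c (0, y)) (c (0, y + 1)) + g2 (c (M + 1, y)) (c (M, y + 1)) := by
      rw [e1, e2]; exact hfin _ _ _ _
    have hL0 : g2 (c (0, y)) (c (0, y + 1)) = 0 :=
      g2_no0 _ _ (hleft y (by omega)) (hleft (y + 1) (by omega))
    have hstep : S (y + 1) = S y +
        (g2 (c (0, y)) (c (0, y + 1)) + g2 (c (M + 1, y)) (c (M, y + 1))) := by
      rw [← key, ← add_assoc, two_self, zero_add]
    rw [show K - y - 1 = M from by omega, hM, hstep, hL0, zero_add]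
  -- row invariant
  have hSdiag : ∀ y, y ≤ K → S y = t2 (c (K - y, y)) := by
    intro y
    induction y with
    | zero =>
      intro _
      have hS0 : S 0 = 0 := by
        simp only [hS]
        apply Finset.sum_eq_zero
        intro x hx
        have := Finset.mem_range.mp hx
        exact g2_no1 _ _ (hbottom x (by omega)) (hbottom (x + 1) (by omega))
      rw [hS0, (t2_no1 _ (hbottom (K - 0) (by omega)))]
    | succ y ih =>
      intro hy
      have hd1 : c (K - y, y) ≠ 2 := hdiag _ _ (by omega)
      have hd2 : c (K - y - 1, y + 1) ≠ 2 := hdiag _ _ (by omega)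
      rw [hrec y (by omega), ih (by omega), g2_no2 _ _ hd1 hd2,
        show K - (y + 1) = K - y - 1 from by omega, ← add_assoc, two_self, zero_add]
  -- contradiction at the top row
  have h1 : S K = t2 (c (0, K)) := by
    have := hSdiag K le_rfl
    rwa [Nat.sub_self] at this
  have hSK : S K = 0 := by simp [hS]
  have ht : t2 (c (0, K)) = 1 :=
    t2_one _ (hleft K (by omega)) (hdiag 0 K (by omega))
  rw [hSK, ht] at h1
  exact absurd h1 (by decide)
end

section
/- Two-dimensional discrete Brouwer fixed point lemma: for any 3-coloring c of the grid {0,...,N−1}² satisfying the boundary condition that c(0,y) = 1 for all y, c(x,0) = 2 for all x > 0, and c(x,N−1) = c(N−1,y) = 0 for all other boundary points, there exists a unit square (with corners (x,y), (x+1,y), (x,y+1), (x+1,y+1)) whose four corners include all three colors. -/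
/-- Sign of a directed edge: +1 for a `1 → 2` edge, -1 for `2 → 1`, 0 otherwise. -/
def sgn3 (a b : Fin 3) : ℤ :=
  if a = 1 ∧ b = 2 then 1 else if a = 2 ∧ b = 1 then -1 else 0

lemma sgn3_antisymm : ∀ a b : Fin 3, sgn3 a b = - sgn3 b a := by decide

lemma sgn3_right_zero : ∀ a : Fin 3, sgn3 a 0 = 0 := by decide

lemma sgn3_square : ∀ a b c d : Fin 3,
    (∀ k : Fin 3, a = k ∨ b = k ∨ c = k ∨ d = k) ∨
      sgn3 a b + sgn3 b c + sgn3 c d + sgn3 d a = 0 := by decide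

/-- Two-dimensional discrete Brouwer lemma: any 3-coloring of `{0,...,N-1}²`
satisfying the standard boundary condition has a unit square whose four corners
include all three colors. -/
theorem discrete_brouwer_two_dim (N : ℕ) (hN : 2 ≤ N) (c : ℕ × ℕ → Fin 3)
    (hleft : ∀ y, y < N → c (0, y) = 1)
    (hbottom : ∀ x, 0 < x → x < N → c (x, 0) = 2)
    (htop : ∀ x, 0 < x → x < N → c (x, N - 1) = 0)
    (hright : ∀ y, 0 < y → y < N - 1 → c (N - 1, y) = 0) :
    ∃ x y : ℕ, x + 1 < N ∧ y + 1 < N ∧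
      ∀ k : Fin 3, c (x, y) = k ∨ c (x + 1, y) = k ∨ c (x, y + 1) = k ∨
        c (x + 1, y + 1) = k := by
  by_contra hcon
  push_neg at hcon
  set M := N - 1 with hMdef
  have hM1 : 1 ≤ M := by omega
  have hMN : M < N := by omega
  set H : ℕ → ℕ → ℤ := fun x y => sgn3 (c (x, y)) (c (x + 1, y)) with hH
  set V : ℕ → ℕ → ℤ := fun x y => sgn3 (c (x, y)) (c (x, y + 1)) with hV
  -- each (necessarily non-trichromatic) square has boundary sum zero
  have hB : ∀ x ∈ Finset.range M, ∀ y ∈ Finset.range M,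
      ((H x y - H x (y + 1)) + (V (x + 1) y - V x y)) = 0 := by
    intro x hx y hy
    simp only [Finset.mem_range] at hx hy
    rcases sgn3_square (c (x, y)) (c (x + 1, y)) (c (x + 1, y + 1)) (c (x, y + 1)) with h | h
    · obtain ⟨k, hk1, hk2, hk3, hk4⟩ := hcon x y (by omega) (by omega)
      rcases h k with h' | h' | h' | h' <;> tauto
    · have ha := sgn3_antisymm (c (x + 1, y + 1)) (c (x, y + 1))
      have hb := sgn3_antisymm (c (x, y + 1)) (c (x, y))
      simp only [hH, hV]
      linarith
  have hzero : ∑ x ∈ Finset.range M, ∑ y ∈ Finset.range M,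
      ((H x y - H x (y + 1)) + (V (x + 1) y - V x y)) = 0 :=
    Finset.sum_eq_zero fun x hx => Finset.sum_eq_zero fun y hy => hB x hx y hy
  -- telescoping
  have hsplit : ∑ x ∈ Finset.range M, ∑ y ∈ Finset.range M,
      ((H x y - H x (y + 1)) + (V (x + 1) y - V x y))
      = (∑ x ∈ Finset.range M, (H x 0 - H x M))
        + ∑ y ∈ Finset.range M, (V M y - V 0 y) := by
    have t1 : ∑ x ∈ Finset.range M, ∑ y ∈ Finset.range M,
        ((H x y - H x (y + 1)) + (V (x + 1) y - V x y))
        = (∑ x ∈ Finset.range M, ∑ y ∈ Finset.range M, (H x y - H x (y + 1)))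
          + ∑ x ∈ Finset.range M, ∑ y ∈ Finset.range M, (V (x + 1) y - V x y) := by
      rw [← Finset.sum_add_distrib]
      exact Finset.sum_congr rfl fun x _ => Finset.sum_add_distrib
    rw [t1]
    congr 1
    · exact Finset.sum_congr rfl fun x _ => Finset.sum_range_sub' (H x) M
    · rw [Finset.sum_comm]
      exact Finset.sum_congr rfl fun y _ => Finset.sum_range_sub (fun x => V x y) M
  -- evaluate the horizontal boundary term: it equals 1
  have hHsum : ∑ x ∈ Finset.range M, (H x 0 - H x M) = 1 := by
    rw [Finset.sum_eq_single_of_mem 0 (Finset.mem_range.mpr hM1)]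
    · have e1 : H 0 0 = 1 := by
        simp only [hH]
        rw [hleft 0 (by omega), hbottom 1 (by omega) (by omega)]
        decide
      have e2 : H 0 M = 0 := by
        simp only [hH]
        rw [htop 1 (by omega) (by omega)]
        exact sgn3_right_zero _
      rw [e1, e2]; norm_num
    · intro x hx hx0
      simp only [Finset.mem_range] at hx
      have e1 : H x 0 = 0 := by
        simp only [hH]
        rw [hbottom x (by omega) (by omega), hbottom (x + 1) (by omega) (by omega)]
        decide
      have e2 : H x M = 0 := by
        simp only [hH]
        rw [htop (x + 1) (by omega) (by omega)]
        exact sgn3_right_zero _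
      rw [e1, e2]
      ring
  -- evaluate the vertical boundary term: it equals 0
  have hVsum : ∑ y ∈ Finset.range M, (V M y - V 0 y) = 0 := by
    apply Finset.sum_eq_zero
    intro y hy
    simp only [Finset.mem_range] at hy
    have e1 : V M y = 0 := by
      simp only [hV]
      have hc : c (M, y + 1) = 0 := by
        by_cases h : y + 1 = M
        · rw [h]; exact htop M (by omega) (by omega)
        · exact hright (y + 1) (by omega) (by omega)
      rw [hc]
      exact sgn3_right_zero _
    have e2 : V 0 y = 0 := by
      simp only [hV]
      rw [hleft y (by omega), hleft (y + 1) (by omega)]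
      decide
    rw [e1, e2]
    ring
  rw [hsplit, hHsum, hVsum] at hzero
  omega
end

section
/- In a finite directed graph with all in- and out-degrees at most 1, if v₀ is the unique source (in-degree 0, out-degree 1), then the number of vertices of total degree 1 other than v₀ and the sink reached from v₀ is even. -/
open Finset

theorem sum_outdeg_eq_sum_indeg {V : Type*} [Fintype V] [DecidableEq V]
    (E : V → V → Prop) [DecidableRel E] :
    ∑ v : V, (univ.filter (fun w => E v w)).card
      = ∑ v : V, (univ.filter (fun u => E u v)).card := by
  simp only [Finset.card_filter]
  exact Finset.sum_comm

/-- In a finite directed graph with all in- and out-degrees at most 1, if `v₀`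
is the unique source (in-degree 0, out-degree 1) and `s` is the sink reached
from `v₀` by following out-edges, then the number of total-degree-1 vertices
other than `v₀` and `s` is even. -/
theorem even_card_other_degree_one_vertices
    {V : Type*} [Fintype V] [DecidableEq V]
    (E : V → V → Prop) [DecidableRel E]
    (hdeg : ∀ v : V, (univ.filter (fun u => E u v)).card ≤ 1 ∧
                     (univ.filter (fun w => E v w)).card ≤ 1)
    (v₀ : V)
    (hin : (univ.filter (fun u => E u v₀)).card = 0)
    (hout : (univ.filter (fun w => E v₀ w)).card = 1)
    (huniq : ∀ v : V, (univ.filter (fun u => E u v)).card = 0 →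
        (univ.filter (fun w => E v w)).card = 1 → v = v₀)
    (s : V)
    (hreach : Relation.ReflTransGen E v₀ s)
    (hsink : (univ.filter (fun w => E s w)).card = 0) :
    Even ((univ.filter (fun v : V =>
      (univ.filter (fun u => E u v)).card + (univ.filter (fun w => E v w)).card = 1 ∧
      v ≠ v₀ ∧ v ≠ s)).card) := by
  set ind : V → ℕ := fun v => (univ.filter (fun u => E u v)).card with hind
  set outd : V → ℕ := fun v => (univ.filter (fun w => E v w)).card with houtd
  -- s ≠ v₀
  have hsv : s ≠ v₀ := by
    intro h; rw [h, hout] at hsink; exact absurd hsink one_ne_zero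
  -- indeg of s is 1
  have hsin : ind s = 1 := by
    rcases hreach.cases_tail with h | ⟨w, _, hw⟩
    · exact absurd h hsv
    · have h1 : 0 < ind s := by
        apply Finset.card_pos.mpr
        exact ⟨w, by simp [hw]⟩
      exact le_antisymm (hdeg s).1 h1
  -- the sum identity
  have hsum : ∑ v : V, outd v = ∑ v : V, ind v := sum_outdeg_eq_sum_indeg E
  -- decompose: filter (outd = 1) = A ∪ C, filter (ind = 1) = B ∪ C
  set A := univ.filter (fun v => ind v = 0 ∧ outd v = 1) with hA
  set B := univ.filter (fun v => ind v = 1 ∧ outd v = 0) with hB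
  set C := univ.filter (fun v => ind v = 1 ∧ outd v = 1) with hC
  have hle01 : ∀ v, (ind v = 0 ∨ ind v = 1) ∧ (outd v = 0 ∨ outd v = 1) := by
    intro v
    exact ⟨Nat.le_one_iff_eq_zero_or_eq_one.mp (hdeg v).1,
           Nat.le_one_iff_eq_zero_or_eq_one.mp (hdeg v).2⟩
  have hsumout : ∑ v : V, outd v = A.card + C.card := by
    have : ∑ v : V, outd v = (univ.filter (fun v => outd v = 1)).card := by
      rw [Finset.card_filter]
      apply Finset.sum_congr rfl
      intro v _
      rcases (hle01 v).2 with h | h <;> simp [h]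
    rw [this, hA, hC, ← Finset.card_union_of_disjoint]
    · congr 1
      ext v
      simp only [Finset.mem_filter, Finset.mem_union, Finset.mem_univ, true_and]
      rcases (hle01 v).1 with h | h <;> simp [h]
    · rw [Finset.disjoint_filter]
      intro v _ h h'
      rw [h.1] at h'
      omega
  have hsumin : ∑ v : V, ind v = B.card + C.card := by
    have : ∑ v : V, ind v = (univ.filter (fun v => ind v = 1)).card := by
      rw [Finset.card_filter]
      apply Finset.sum_congr rfl
      intro v _
      rcases (hle01 v).1 with h | h <;> simp [h]
    rw [this, hB, hC, ← Finset.card_union_of_disjoint]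
    · congr 1
      ext v
      simp only [Finset.mem_filter, Finset.mem_union, Finset.mem_univ, true_and]
      rcases (hle01 v).2 with h | h <;> simp [h]
    · rw [Finset.disjoint_filter]
      intro v _ h h'
      rw [h.2] at h'
      omega
  have hAB : A.card = B.card := by
    have := hsum
    rw [hsumout, hsumin] at this
    omega
  -- A = {v₀}
  have hAeq : A = {v₀} := by
    ext v
    simp only [hA, Finset.mem_filter, Finset.mem_univ, true_and, Finset.mem_singleton]
    constructor
    · rintro ⟨h0, h1⟩; exact huniq v h0 h1
    · rintro rfl; exact ⟨hin, hout⟩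
  have hBcard : B.card = 1 := by rw [← hAB, hAeq]; simp
  -- B = {s}
  have hsB : s ∈ B := by
    simp only [hB, Finset.mem_filter, Finset.mem_univ, true_and]
    exact ⟨hsin, hsink⟩
  have hBeq : B = {s} := by
    rcases Finset.card_eq_one.mp hBcard with ⟨a, ha⟩
    rw [ha] at hsB ⊢
    rw [Finset.mem_singleton] at hsB
    rw [hsB]
  -- the target set is empty
  have hempty : (univ.filter (fun v : V =>
      ind v + outd v = 1 ∧ v ≠ v₀ ∧ v ≠ s)) = ∅ := by
    apply Finset.filter_false_of_mem
    intro v _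
    rintro ⟨h1, hv0, hvs⟩
    rcases (hle01 v).1 with hi | hi <;> rcases (hle01 v).2 with ho | ho
    · omega
    · exact hv0 (huniq v hi ho)
    · apply hvs
      have : v ∈ B := by
        simp only [hB, Finset.mem_filter, Finset.mem_univ, true_and]
        exact ⟨hi, ho⟩
      rw [hBeq, Finset.mem_singleton] at this
      exact this
    · omega
  rw [hempty]
  simp
end
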